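/- arXiv:1201.3548 — 2 statements merged into one kernel-verified Lean document; each statement's English description precedes it below -/
import Mathlib

section
/- Let a = (a_1, a_2, …) be a sequence in which each a_m is the reciprocal of an odd integer at least 3, let S_a ⊂ ℝ² be the associated carpet with the Euclidean metric and natural measure μ. If ∑_m a_m = ∞ (i.e. a ∉ ℓ¹), then (S_a, d, μ) does not support a 1-Poincaré inequality. -/
open MeasureTheory Metric Set Filter
open scoped ENNReal NNReal Topology

noncomputable section

abbrev Plane : Type := EuclideanSpace ℝ (Fin 2)

/-- `a` is a sequence of reciprocals of odd integers at least 3. -/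
def GoodSeq (a : ℕ → ℝ) : Prop := ∀ m, ∃ k : ℕ, 1 ≤ k ∧ a m = ((2 * k + 1 : ℕ) : ℝ)⁻¹

/-- `sA a m` is the side length `s_m = a_1 ⋯ a_m` of the level `m` squares. -/
def sA (a : ℕ → ℝ) (m : ℕ) : ℝ := ∏ j ∈ Finset.range m, a j

/-- number of subdivisions of each side at step `m+1` (an odd integer `≥ 3`). -/
def nA (a : ℕ → ℝ) (m : ℕ) : ℕ := ⌊(a m)⁻¹⌋₊

/-- the axis-parallel closed square with lower-left corner `c` and side `s`. -/
def csq (c : Plane) (s : ℝ) : Set Plane :=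
  {p | p 0 ∈ Icc (c 0) (c 0 + s) ∧ p 1 ∈ Icc (c 1) (c 1 + s)}

/-- lower-left corners of the level `m` squares `𝒯_m` of the carpet construction. -/
def corners (a : ℕ → ℝ) : ℕ → Set Plane
  | 0 => {p | p 0 = 0 ∧ p 1 = 0}
  | m + 1 =>
      {p | ∃ c ∈ corners a m, ∃ i j : ℕ,
        i < nA a m ∧ j < nA a m ∧ ¬(i = (nA a m - 1) / 2 ∧ j = (nA a m - 1) / 2) ∧
        p 0 = c 0 + i * sA a (m + 1) ∧ p 1 = c 1 + j * sA a (m + 1)}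

/-- the level `m` precarpet `S_{a,m}`. -/
def precarpet (a : ℕ → ℝ) (m : ℕ) : Set Plane :=
  ⋃ c ∈ corners a m, csq c (sA a m)

/-- the carpet `S_a`. -/
def carpet (a : ℕ → ℝ) : Set Plane := ⋂ m, precarpet a m

/-- The natural measure on the carpet: the Borel probability measure giving each level `m`
square of the construction mass `∏_{j≤m} (a_j⁻² - 1)⁻¹`. -/
def IsNaturalMeasure (a : ℕ → ℝ) (μ : Measure ↥(carpet a)) : Prop :=
  IsProbabilityMeasure μ ∧
    ∀ m : ℕ, ∀ c ∈ corners a m,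
      μ (Subtype.val ⁻¹' csq c (sA a m)) =
        ENNReal.ofReal (∏ j ∈ Finset.range m, ((a j)⁻¹ ^ 2 - 1)⁻¹)

/-- `ρ` is an upper gradient of `u`: for every rectifiable curve (equivalently, every
`1`-Lipschitz parametrized curve) `γ : [0, L] → X`, `|u(γ L) - u(γ 0)| ≤ ∫_γ ρ ds`. -/
def IsUpperGradient {X : Type*} [MetricSpace X] (u : X → ℝ) (ρ : X → ℝ≥0∞) : Prop :=
  ∀ L : ℝ, 0 ≤ L → ∀ γ : ℝ → X, LipschitzOnWith 1 γ (Icc 0 L) →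
    ENNReal.ofReal |u (γ L) - u (γ 0)| ≤ ∫⁻ t in Icc 0 L, ρ (γ t)

/-- The metric measure space `(X, d, μ)` supports a `p`-Poincaré inequality. -/
def SupportsPoincare {X : Type*} [MetricSpace X] [MeasurableSpace X]
    (μ : Measure X) (p : ℝ) : Prop :=
  ∃ C : ℝ, 1 ≤ C ∧ ∃ lam : ℝ, 1 ≤ lam ∧
    ∀ u : X → ℝ, Continuous u → ∀ ρ : X → ℝ≥0∞, Measurable ρ → IsUpperGradient u ρ →
      ∀ x : X, ∀ r : ℝ, 0 < r →
        (∫⁻ y in ball x r, ENNReal.ofReal |u y - ⨍ z in ball x r, u z ∂μ| ∂μ) / μ (ball x r) ≤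
          ENNReal.ofReal (C * diam (ball x r)) *
            ((∫⁻ y in ball x (lam * r), ρ y ^ p ∂μ) / μ (ball x (lam * r))) ^ (1 / p)

/-!
Test the Poincaré inequality on a ball containing the whole carpet. At each level pick, inside the
previous column, its middle column of level-`m` cells; these columns shrink to a vertical strip of
width `s_m` inside the level-one middle column. Refining a cell of this column keeps only
`n_j - 1` of its `n_j` subcells in the new column (the middle one is the removed square), so the
strip has mass at most `∏ (n_j - 1) / (n_j ^ 2 - 1)`. The ramp `u_m` of the first coordinate
across the strip has upper gradient `s_m⁻¹` on the strip, whose integral is at most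
`∏ n_j / (n_j + 1) ≤ exp (-∑ a_j / 2)`, which tends to `0` when `∑ a_j = ∞`. But `u_m` is `0` to
the left and `1` to the right of the level-one middle column, and both sides have positive mass
independent of `m`, so the mean oscillation of `u_m` does not tend to `0`.
-/

def ramp (L w x : ℝ) : ℝ := (min (L + w) (max L x) - L) / w

section Ramp

variable {L w : ℝ}

lemma ramp_of_le {x : ℝ} (hw : 0 ≤ w) (hx : x ≤ L) : ramp L w x = 0 := by
  rw [ramp, max_eq_left hx, min_eq_right (by linarith), sub_self, zero_div]

lemma ramp_of_ge {x : ℝ} (hw : 0 < w) (hx : L + w ≤ x) : ramp L w x = 1 := by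
  rw [ramp, max_eq_right (by linarith), min_eq_left hx, add_sub_cancel_left, div_self hw.ne']

lemma continuous_ramp : Continuous (ramp L w) := by
  unfold ramp; fun_prop

lemma ofReal_abs_ramp_sub_le (hw : 0 < w) (x y : ℝ) :
    ENNReal.ofReal |ramp L w y - ramp L w x| ≤
      ENNReal.ofReal w⁻¹ * volume (Ioo L (L + w) ∩ uIcc x y) := by
  wlog hxy : x ≤ y generalizing x y
  · rw [abs_sub_comm, uIcc_comm]; exact this y x (le_of_not_ge hxy)
  have hclip : min (L + w) (max L y) - min (L + w) (max L x) ≤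
      max 0 (min (L + w) y - max L x) := by
    simp only [min_def, max_def]; split_ifs <;> linarith
  have hmono : min (L + w) (max L x) ≤ min (L + w) (max L y) :=
    min_le_min le_rfl (max_le_max le_rfl hxy)
  have hdiff : ramp L w y - ramp L w x = w⁻¹ * (min (L + w) (max L y) - min (L + w) (max L x)) := by
    unfold ramp; field_simp; ring
  calc ENNReal.ofReal |ramp L w y - ramp L w x|
      ≤ ENNReal.ofReal (w⁻¹ * max 0 (min (L + w) y - max L x)) := by
        rw [hdiff, abs_of_nonneg (by have := inv_pos.2 hw; nlinarith)]
        gcongr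
    _ = ENNReal.ofReal w⁻¹ * volume (Ioo L (L + w) ∩ Ioo x y) := by
        rw [ENNReal.ofReal_mul (by positivity), Ioo_inter_Ioo, Real.volume_Ioo,
          ENNReal.ofReal_max, ENNReal.ofReal_zero, max_eq_right zero_le]
    _ ≤ ENNReal.ofReal w⁻¹ * volume (Ioo L (L + w) ∩ uIcc x y) := by
        rw [uIcc_of_le hxy]; gcongr; exact Ioo_subset_Icc_self

end Ramp

theorem isUpperGradient_ramp_comp {X : Type*} [MetricSpace X] {f : X → ℝ}
    (hf : LipschitzWith 1 f) (L : ℝ) {w : ℝ} (hw : 0 < w) :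
    IsUpperGradient (fun x => ramp L w (f x))
      ((f ⁻¹' Ioo L (L + w)).indicator fun _ => ENNReal.ofReal w⁻¹) := by
  intro T hT γ hγ
  obtain ⟨H, hH, hHγ⟩ := (by simpa using hf.comp_lipschitzOnWith hγ :
    LipschitzOnWith 1 (f ∘ γ) (Icc 0 T)).extend_real
  have h0 : f (γ 0) = H 0 := hHγ (left_mem_Icc.2 hT)
  have hT' : f (γ T) = H T := hHγ (right_mem_Icc.2 hT)
  set E := Icc 0 T ∩ H ⁻¹' Ioo L (L + w)
  have hE : MeasurableSet E := measurableSet_Icc.inter (hH.continuous.measurable measurableSet_Ioo)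
  have hIVT : Ioo L (L + w) ∩ uIcc (H 0) (H T) ⊆ H '' E := by
    rintro y ⟨hyU, hy⟩
    obtain ⟨t, ht, rfl⟩ := intermediate_value_uIcc hH.continuous.continuousOn hy
    exact ⟨t, ⟨by rwa [uIcc_of_le hT] at ht, hyU⟩, rfl⟩
  have hvol : volume (H '' E) ≤ volume E := by
    simpa [hausdorffMeasure_real] using hH.hausdorffMeasure_image_le zero_le_one E
  have hind : ∀ t, E.indicator (fun _ => ENNReal.ofReal w⁻¹) t ≤
      (f ⁻¹' Ioo L (L + w)).indicator (fun _ => ENNReal.ofReal w⁻¹) (γ t) := by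
    intro t
    by_cases ht : t ∈ E
    · have hγt : f (γ t) = H t := hHγ ht.1
      rw [indicator_of_mem ht, indicator_of_mem (by simpa [mem_preimage, hγt] using ht.2)]
    · rw [indicator_of_notMem ht]; exact zero_le
  calc ENNReal.ofReal |ramp L w (f (γ T)) - ramp L w (f (γ 0))|
      ≤ ENNReal.ofReal w⁻¹ * volume (Ioo L (L + w) ∩ uIcc (H 0) (H T)) := by
        rw [h0, hT']; exact ofReal_abs_ramp_sub_le hw _ _
    _ ≤ ENNReal.ofReal w⁻¹ * volume E := mul_le_mul_right ((measure_mono hIVT).trans hvol) _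
    _ = ∫⁻ t in Icc 0 T, E.indicator (fun _ => ENNReal.ofReal w⁻¹) t := by
        rw [lintegral_indicator hE, setLIntegral_const, Measure.restrict_apply hE,
          inter_eq_left.2 inter_subset_left, mul_comm]
    _ ≤ _ := lintegral_mono hind

lemma min_le_lintegral_abs_sub {X : Type*} [MeasurableSpace X] (μ : Measure X) {u : X → ℝ}
    {A B : Set X} (hA : MeasurableSet A) (hB : MeasurableSet B) (hu0 : EqOn u 0 A)
    (hu1 : EqOn u 1 B) (c : ℝ) :
    min (μ A) (μ B) ≤ ∫⁻ x, ENNReal.ofReal |u x - c| ∂μ := by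
  have hAB : Disjoint A B := disjoint_left.2 fun x hxA hxB => by
    simpa [hu0 hxA] using hu1 hxB
  have hc : 1 ≤ ENNReal.ofReal |0 - c| + ENNReal.ofReal |1 - c| := by
    rw [← ENNReal.ofReal_add (abs_nonneg _) (abs_nonneg _), ← ENNReal.ofReal_one]
    exact ENNReal.ofReal_le_ofReal (by simpa [add_comm] using abs_sub_le 1 c 0)
  calc min (μ A) (μ B)
      ≤ (ENNReal.ofReal |0 - c| + ENNReal.ofReal |1 - c|) * min (μ A) (μ B) :=
        le_mul_of_one_le_left zero_le hc
    _ ≤ ENNReal.ofReal |0 - c| * μ A + ENNReal.ofReal |1 - c| * μ B := by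
        rw [add_mul]; gcongr
        exacts [min_le_left _ _, min_le_right _ _]
    _ = (∫⁻ x in A, ENNReal.ofReal |u x - c| ∂μ) + ∫⁻ x in B, ENNReal.ofReal |u x - c| ∂μ := by
        rw [setLIntegral_congr_fun hA fun x hx => by rw [hu0 hx, Pi.zero_apply],
          setLIntegral_congr_fun hB fun x hx => by rw [hu1 hx, Pi.one_apply],
          setLIntegral_const, setLIntegral_const]
    _ = ∫⁻ x in A ∪ B, ENNReal.ofReal |u x - c| ∂μ := (lintegral_union hB hAB).symm
    _ ≤ ∫⁻ x, ENNReal.ofReal |u x - c| ∂μ := setLIntegral_le_lintegral _ _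

theorem not_supportsPoincare_one_of_forall_exists_upperGradient_lt {X : Type*} [MetricSpace X]
    [MeasurableSpace X] [BoundedSpace X] (μ : Measure X) [IsProbabilityMeasure μ] {A B : Set X}
    (hA : MeasurableSet A) (hB : MeasurableSet B) (hμA : μ A ≠ 0) (hμB : μ B ≠ 0)
    (h : ∀ ε : ℝ≥0∞, 0 < ε → ∃ (u : X → ℝ) (ρ : X → ℝ≥0∞), Continuous u ∧ Measurable ρ ∧
      IsUpperGradient u ρ ∧ EqOn u 0 A ∧ EqOn u 1 B ∧ ∫⁻ x, ρ x ∂μ < ε) :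
    ¬ SupportsPoincare μ 1 := by
  rintro ⟨C, -, lam, hlam, hP⟩
  obtain ⟨R, hR⟩ := boundedSpace_iff.1 ‹BoundedSpace X›
  obtain ⟨x⟩ := nonempty_of_isProbabilityMeasure μ
  have hball : ∀ r, R < r → ball x r = univ := fun r hr =>
    eq_univ_of_forall fun y => mem_ball.2 ((hR y x).trans_lt hr)
  have hr : R < |R| + 1 := by linarith [le_abs_self R]
  have hr' : |R| + 1 ≤ lam * (|R| + 1) := le_mul_of_one_le_left (by positivity) hlam
  set K := ENNReal.ofReal (C * diam (univ : Set X))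
  obtain ⟨ε, hε, hεK⟩ := ENNReal.exists_pos_mul_lt (ENNReal.ofReal_ne_top : K ≠ ∞)
    (lt_min (pos_iff_ne_zero.2 hμA) (pos_iff_ne_zero.2 hμB)).ne'
  obtain ⟨u, ρ, hu, hρ, hug, hu0, hu1, hρε⟩ := h ε hε
  have key := hP u hu ρ hρ hug x _ (by positivity : (0 : ℝ) < |R| + 1)
  rw [hball _ hr, hball _ (hr.trans_le hr')] at key
  simp only [Measure.restrict_univ, measure_univ, div_one, ENNReal.rpow_one] at key
  refine lt_irrefl (min (μ A) (μ B)) ?_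
  calc min (μ A) (μ B) ≤ ∫⁻ y, ENNReal.ofReal |u y - ⨍ z, u z ∂μ| ∂μ :=
        min_le_lintegral_abs_sub μ hA hB hu0 hu1 _
    _ ≤ K * ∫⁻ y, ρ y ∂μ := key
    _ ≤ ε * K := by rw [mul_comm]; gcongr
    _ < min (μ A) (μ B) := hεK

lemma natCast_le_of_mul_lt_mul_add_self {s : ℝ} (hs : 0 < s) {i j : ℕ}
    (h : i * s < j * s + s) : i ≤ j := by
  have : (i : ℝ) < j + 1 := lt_of_mul_lt_mul_right (by linarith) hs.le
  exact_mod_cast Nat.lt_succ_iff.1 (by exact_mod_cast this)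

lemma eq_and_eq_of_mul_add_eq_mul_add {n i j b c : ℕ} (hi : i < n) (hj : j < n)
    (h : b * n + i = c * n + j) : b = c ∧ i = j := by
  have hn : 0 < n := by omega
  have hb := (Nat.div_mod_unique hn).2 ⟨(by ring : i + n * b = b * n + i), hi⟩
  have hc := (Nat.div_mod_unique hn).2 ⟨(by ring : j + n * c = c * n + j), hj⟩
  rw [h] at hb
  exact ⟨hb.1.symm.trans hc.1, hb.2.symm.trans hc.2⟩

lemma prod_mul_sub_one_mul_inv_sq_sub_one_le_exp {ι : Type*} (s : Finset ι) (x : ι → ℝ)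
    (hx : ∀ i ∈ s, 1 < x i) :
    ∏ i ∈ s, x i * (x i - 1) * (x i ^ 2 - 1)⁻¹ ≤ Real.exp (-(∑ i ∈ s, (x i)⁻¹) / 2) := by
  rw [neg_div, Finset.sum_div, ← Finset.sum_neg_distrib, Real.exp_sum]
  refine Finset.prod_le_prod (fun i hi => ?_) fun i hi => ?_
  · have := hx i hi
    have : 0 < x i ^ 2 - 1 := by nlinarith
    positivity
  · have h1 := hx i hi
    have hfactor : x i * (x i - 1) * (x i ^ 2 - 1)⁻¹ = 1 - (x i + 1)⁻¹ := by
      have : x i - 1 ≠ 0 := by linarith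
      have : x i + 1 ≠ 0 := by linarith
      rw [show x i ^ 2 - 1 = (x i - 1) * (x i + 1) by ring]
      field_simp; ring
    have hinv : (x i)⁻¹ / 2 ≤ (x i + 1)⁻¹ := calc
      (x i)⁻¹ / 2 = (2 * x i)⁻¹ := by rw [mul_inv, div_eq_mul_inv, mul_comm]
      _ ≤ (x i + 1)⁻¹ := inv_anti₀ (by linarith) (by linarith)
    rw [hfactor]
    linarith [Real.add_one_le_exp (-((x i)⁻¹ / 2))]

lemma tendsto_ofReal_exp_neg_sum_range_div_two {f : ℕ → ℝ} (hf : ∀ n, 0 ≤ f n)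
    (h : ¬ Summable f) :
    Tendsto (fun m => ENNReal.ofReal (Real.exp (-(∑ j ∈ Finset.range m, f j) / 2))) atTop
      (𝓝 0) := by
  have hsum := (not_summable_iff_tendsto_nat_atTop_of_nonneg hf).1 h
  have hexp := Real.tendsto_exp_atBot.comp
    ((tendsto_neg_atTop_atBot.comp hsum).atBot_div_const two_pos)
  simpa [Function.comp_def] using (ENNReal.continuous_ofReal.tendsto 0).comp hexp

namespace GoodSeq

variable {a : ℕ → ℝ}

lemma exists_nA_eq (ha : GoodSeq a) (m : ℕ) : ∃ k, 1 ≤ k ∧ nA a m = 2 * k + 1 := by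
  obtain ⟨k, hk, hak⟩ := ha m
  exact ⟨k, hk, by rw [nA, hak, inv_inv, Nat.floor_natCast]⟩

lemma inv_eq_nA (ha : GoodSeq a) (m : ℕ) : (a m)⁻¹ = nA a m := by
  obtain ⟨k, -, hak⟩ := ha m
  rw [nA, hak, inv_inv, Nat.floor_natCast]

lemma three_le_nA (ha : GoodSeq a) (m : ℕ) : 3 ≤ nA a m := by
  obtain ⟨k, hk, hn⟩ := ha.exists_nA_eq m; omega

lemma nA_eq_two_mul_add_one (ha : GoodSeq a) (m : ℕ) :
    nA a m = 2 * ((nA a m - 1) / 2) + 1 := by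
  obtain ⟨k, hk, hn⟩ := ha.exists_nA_eq m; omega

lemma pos (ha : GoodSeq a) (m : ℕ) : 0 < a m := by
  rw [← inv_pos, ha.inv_eq_nA]; exact_mod_cast (ha.three_le_nA m).trans_lt' (by norm_num)

lemma sA_pos (ha : GoodSeq a) (m : ℕ) : 0 < sA a m :=
  Finset.prod_pos fun j _ => ha.pos j

lemma sA_eq_nA_mul_sA_succ (ha : GoodSeq a) (m : ℕ) :
    sA a m = nA a m * sA a (m + 1) := by
  rw [sA, sA, Finset.prod_range_succ, ← ha.inv_eq_nA, mul_comm, mul_assoc,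
    mul_inv_cancel₀ (ha.pos m).ne', mul_one]

end GoodSeq

namespace Carpet

open scoped Finset

variable {a : ℕ → ℝ} {μ : Measure ↥(carpet a)}

def holedGrid (n : ℕ) : Finset (ℕ × ℕ) :=
  (Finset.range n ×ˢ Finset.range n).filter fun ij => ¬(ij.1 = (n - 1) / 2 ∧ ij.2 = (n - 1) / 2)

def cellIndices (a : ℕ → ℝ) : ℕ → Finset (ℕ × ℕ)
  | 0 => {(0, 0)}
  | m + 1 => (cellIndices a m).biUnion fun c =>
      (holedGrid (nA a m)).image fun ij => (c.1 * nA a m + ij.1, c.2 * nA a m + ij.2)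

def cellCorner (a : ℕ → ℝ) (m : ℕ) (c : ℕ × ℕ) : Plane := !₂[c.1 * sA a m, c.2 * sA a m]

@[simp] lemma cellCorner_zero (m : ℕ) (c : ℕ × ℕ) : cellCorner a m c 0 = c.1 * sA a m := by
  simp [cellCorner]

lemma cellCorner_eq_iff {p : Plane} {m : ℕ} {c : ℕ × ℕ} :
    cellCorner a m c = p ↔ p 0 = c.1 * sA a m ∧ p 1 = c.2 * sA a m := by
  refine ⟨by rintro rfl; simp [cellCorner], fun ⟨h0, h1⟩ => ?_⟩
  ext i; fin_cases i <;> simp [cellCorner, h0, h1]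

lemma corners_eq_image (ha : GoodSeq a) (m : ℕ) :
    corners a m = cellCorner a m '' cellIndices a m := by
  induction m with
  | zero =>
    ext p
    simp [corners, cellIndices, eq_comm (a := p), cellCorner_eq_iff]
  | succ m ih =>
    ext p
    simp only [corners, ih, cellIndices, holedGrid, Finset.coe_biUnion, Finset.coe_image,
      Finset.coe_filter, Finset.mem_product, Finset.mem_range, mem_ofPred_eq, mem_image,
      Finset.mem_coe, mem_iUnion, exists_prop, cellCorner_eq_iff]
    have hs := ha.sA_eq_nA_mul_sA_succ m
    constructor
    · rintro ⟨c, ⟨c', hc', h0, h1⟩, i, j, hi, hj, hij, hp0, hp1⟩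
      refine ⟨_, ⟨c', hc', (i, j), ⟨⟨hi, hj⟩, hij⟩, rfl⟩, ?_, ?_⟩
      · rw [hp0, h0, hs]; push_cast; ring
      · rw [hp1, h1, hs]; push_cast; ring
    · rintro ⟨_, ⟨c', hc', ij, ⟨⟨hi, hj⟩, hij⟩, rfl⟩, hp0, hp1⟩
      refine ⟨cellCorner a m c', ⟨c', hc', by simp [cellCorner]⟩, ij.1, ij.2, hi, hj, hij, ?_, ?_⟩
      · simp [hp0, cellCorner, hs]; ring
      · simp [hp1, cellCorner, hs]; ring

lemma measure_preimage_le_card_filter_mul (ha : GoodSeq a) (hμ : IsNaturalMeasure a μ) (m : ℕ)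
    (P : ℕ × ℕ → Prop) [DecidablePred P] (S : Set Plane)
    (hS : ∀ c ∈ cellIndices a m, ∀ p ∈ csq (cellCorner a m c) (sA a m), p ∈ S → P c) :
    μ (Subtype.val ⁻¹' S) ≤
      #{c ∈ cellIndices a m | P c} *
        ENNReal.ofReal (∏ j ∈ Finset.range m, ((a j)⁻¹ ^ 2 - 1)⁻¹) := by
  have hsub : (Subtype.val ⁻¹' S : Set ↥(carpet a)) ⊆
      ⋃ c ∈ {c ∈ cellIndices a m | P c}, Subtype.val ⁻¹' csq (cellCorner a m c) (sA a m) := by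
    intro x hx
    obtain ⟨_, hq, hxq⟩ := mem_iUnion₂.1 (mem_iInter.1 x.2 m)
    rw [corners_eq_image ha] at hq
    obtain ⟨c, hc, rfl⟩ := hq
    exact mem_iUnion₂.2 ⟨c, Finset.mem_filter.2 ⟨hc, hS c hc _ hxq hx⟩, hxq⟩
  calc μ (Subtype.val ⁻¹' S)
      ≤ ∑ c ∈ {c ∈ cellIndices a m | P c}, μ (Subtype.val ⁻¹' csq (cellCorner a m c) (sA a m)) :=
        (measure_mono hsub).trans (measure_biUnion_finset_le _ _)
    _ = _ := by
        rw [Finset.sum_congr rfl fun c hc => hμ.2 m _ (by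
          rw [corners_eq_image ha]; exact mem_image_of_mem _ (Finset.mem_filter.1 hc).1),
          Finset.sum_const, nsmul_eq_mul]

lemma cellIndices_one_subset :
    cellIndices a 1 ⊆ Finset.range (nA a 0) ×ˢ Finset.range (nA a 0) := by
  intro c hc
  simp only [cellIndices, holedGrid, Finset.singleton_biUnion, Finset.mem_image,
    Finset.mem_filter, Finset.mem_product, Finset.mem_range] at hc
  obtain ⟨ij, ⟨hij, -⟩, rfl⟩ := hc
  simpa using hij

lemma measure_preimage_ne_zero_of_compl_in_columns (ha : GoodSeq a) (hμ : IsNaturalMeasure a μ)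
    {S : Set Plane} (hSm : MeasurableSet S) (I : Finset ℕ) (hIcard : 2 * #I ≤ nA a 0 + 1)
    (hS : ∀ c ∈ cellIndices a 1, ∀ p ∈ csq (cellCorner a 1 c) (sA a 1), p ∉ S → c.1 ∈ I) :
    μ (Subtype.val ⁻¹' S) ≠ 0 := by
  have := hμ.1
  set n := nA a 0
  have hn : (3 : ℝ) ≤ n := by exact_mod_cast ha.three_le_nA 0
  have hcard : #{c ∈ cellIndices a 1 | c.1 ∈ I} ≤ #I * n := by
    rw [← Finset.card_range n, ← Finset.card_product]
    refine Finset.card_le_card fun c hc => ?_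
    rw [Finset.mem_filter] at hc
    exact Finset.mem_product.2 ⟨hc.2, (Finset.mem_product.1 (cellIndices_one_subset hc.1)).2⟩
  have hcard' : (2 * (#I * n : ℕ) : ℝ) ≤ (n + 1) * n := by
    have : (2 * #I : ℝ) ≤ n + 1 := by exact_mod_cast hIcard
    push_cast; nlinarith
  -- `Sᶜ` meets at most `#I * n < n ^ 2 - 1` level-one cells, each of mass `(n ^ 2 - 1)⁻¹`.
  have hlt : μ (Subtype.val ⁻¹' Sᶜ) < 1 := calc
    μ (Subtype.val ⁻¹' Sᶜ) ≤ (#I * n : ℕ) * ENNReal.ofReal ((n ^ 2 - 1 : ℝ)⁻¹) := by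
      refine (measure_preimage_le_card_filter_mul ha hμ 1 (fun c => c.1 ∈ I) Sᶜ hS).trans ?_
      rw [Finset.prod_range_one, ha.inv_eq_nA]; gcongr
    _ < 1 := by
      rw [← ENNReal.ofReal_natCast, ← ENNReal.ofReal_mul (by positivity), ENNReal.ofReal_lt_one,
        ← div_eq_mul_inv, div_lt_one (by nlinarith)]
      nlinarith
  intro h0
  rw [preimage_compl, prob_compl_eq_one_sub (measurable_subtype_coe hSm), h0, tsub_zero] at hlt
  exact lt_irrefl _ hlt

def centralColumn (a : ℕ → ℝ) : ℕ → ℕ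
  | 0 => 0
  | m + 1 => centralColumn a m * nA a m + (nA a m - 1) / 2

lemma filter_centralColumn_succ_subset (m : ℕ) :
    {c ∈ cellIndices a (m + 1) | c.1 = centralColumn a (m + 1)} ⊆
      {c ∈ cellIndices a m | c.1 = centralColumn a m}.biUnion fun c =>
        ((Finset.range (nA a m)).erase ((nA a m - 1) / 2)).image fun j =>
          (c.1 * nA a m + (nA a m - 1) / 2, c.2 * nA a m + j) := by
  intro c hc
  rw [Finset.mem_filter, cellIndices, Finset.mem_biUnion] at hc
  simp only [holedGrid, centralColumn, Finset.mem_filter,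
    Finset.mem_image, Finset.mem_product, Finset.mem_range] at hc
  obtain ⟨⟨c', hc', ij, ⟨⟨hi, hj⟩, hij⟩, rfl⟩, hcol⟩ := hc
  obtain ⟨hc'col, hik⟩ := eq_and_eq_of_mul_add_eq_mul_add hi (by omega) hcol
  simp only [Finset.mem_biUnion, Finset.mem_filter, Finset.mem_image, Finset.mem_erase,
    Finset.mem_range]
  exact ⟨c', ⟨hc', hc'col⟩, ij.2, ⟨fun h => hij ⟨hik, h⟩, hj⟩, by rw [hik]⟩

lemma card_filter_centralColumn_le (ha : GoodSeq a) (m : ℕ) :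
    #{c ∈ cellIndices a m | c.1 = centralColumn a m} ≤ ∏ j ∈ Finset.range m, (nA a j - 1) := by
  induction m with
  | zero => exact (Finset.card_filter_le _ _).trans (by simp [cellIndices])
  | succ m ih =>
    have hk : (nA a m - 1) / 2 ∈ Finset.range (nA a m) := by
      have := ha.three_le_nA m; simp only [Finset.mem_range]; omega
    calc #{c ∈ cellIndices a (m + 1) | c.1 = centralColumn a (m + 1)}
        ≤ #{c ∈ cellIndices a m | c.1 = centralColumn a m} * (nA a m - 1) := by
          refine (Finset.card_le_card (filter_centralColumn_succ_subset m)).trans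
            (Finset.card_biUnion_le_card_mul _ _ _ fun c _ => ?_)
          exact Finset.card_image_le.trans_eq
            (by rw [Finset.card_erase_of_mem hk, Finset.card_range])
      _ ≤ _ := by rw [Finset.prod_range_succ]; gcongr

lemma centralColumn_mul_sA_bounds (ha : GoodSeq a) {m : ℕ} (hm : 1 ≤ m) :
    ((nA a 0 - 1) / 2 : ℕ) * sA a 1 ≤ centralColumn a m * sA a m ∧
      centralColumn a m * sA a m + sA a m ≤ ((nA a 0 - 1) / 2 : ℕ) * sA a 1 + sA a 1 := by
  induction m, hm using Nat.le_induction with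
  | base => simp [centralColumn]
  | succ m hm ih =>
    have hs := ha.sA_eq_nA_mul_sA_succ m
    have hpos := ha.sA_pos (m + 1)
    have hk : (((nA a m - 1) / 2 : ℕ) : ℝ) + 1 ≤ nA a m := by
      have := ha.three_le_nA m; exact_mod_cast (by omega : (nA a m - 1) / 2 + 1 ≤ nA a m)
    have hstep : (centralColumn a (m + 1) : ℝ) * sA a (m + 1) =
        centralColumn a m * sA a m + ((nA a m - 1) / 2 : ℕ) * sA a (m + 1) := by
      rw [centralColumn, hs]; push_cast; ring
    constructor
    · rw [hstep]; nlinarith [ih.1]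
    · rw [hstep]; nlinarith [ih.2]

lemma lipschitzWith_coord_zero : LipschitzWith 1 fun z : ↥(carpet a) => (z : Plane) 0 := by
  simpa [Function.comp_def] using ((LipschitzWith.eval (α := fun _ : Fin 2 => ℝ) 0).comp
    (PiLp.lipschitzWith_ofLp 2 _)).comp (LipschitzWith.subtype_val (carpet a))

lemma measurable_coord_zero : Measurable fun z : ↥(carpet a) => (z : Plane) 0 :=
  lipschitzWith_coord_zero.continuous.measurable

lemma lintegral_indicator_centralStrip_le (ha : GoodSeq a) (hμ : IsNaturalMeasure a μ) (m : ℕ) :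
    ∫⁻ z, ((fun z : ↥(carpet a) => (z : Plane) 0) ⁻¹'
        Ioo (centralColumn a m * sA a m) (centralColumn a m * sA a m + sA a m)).indicator
          (fun _ => ENNReal.ofReal (sA a m)⁻¹) z ∂μ ≤
      ENNReal.ofReal (Real.exp (-(∑ j ∈ Finset.range m, a j) / 2)) := by
  set s := sA a m
  set L := centralColumn a m * s
  have hs : 0 < s := ha.sA_pos m
  have hstrip : μ ((fun z : ↥(carpet a) => (z : Plane) 0) ⁻¹' Ioo L (L + s)) ≤
      ((∏ j ∈ Finset.range m, (nA a j - 1) : ℕ) : ℝ≥0∞) *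
        ENNReal.ofReal (∏ j ∈ Finset.range m, ((a j)⁻¹ ^ 2 - 1)⁻¹) := by
    refine (measure_preimage_le_card_filter_mul ha hμ m (fun c => c.1 = centralColumn a m)
      {p | p 0 ∈ Ioo L (L + s)} fun c _ p hp hpS => ?_).trans ?_
    · simp only [csq, cellCorner_zero, mem_Icc] at hp
      exact le_antisymm (natCast_le_of_mul_lt_mul_add_self hs (by linarith [hp.1.1, hpS.2]))
        (natCast_le_of_mul_lt_mul_add_self hs (by linarith [hp.1.2, hpS.1]))
    · gcongr; exact_mod_cast card_filter_centralColumn_le ha m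
  have hcast : ((∏ j ∈ Finset.range m, (nA a j - 1) : ℕ) : ℝ) =
      ∏ j ∈ Finset.range m, ((a j)⁻¹ - 1) := by
    rw [Nat.cast_prod]
    refine Finset.prod_congr rfl fun j _ => ?_
    rw [Nat.cast_sub (by linarith [ha.three_le_nA j]), ha.inv_eq_nA, Nat.cast_one]
  have hsinv : s⁻¹ = ∏ j ∈ Finset.range m, (a j)⁻¹ :=
    (Finset.prod_inv_distrib _).symm
  have hx : ∀ j ∈ Finset.range m, 1 < (a j)⁻¹ := fun j _ => by
    rw [ha.inv_eq_nA]; exact_mod_cast (ha.three_le_nA j).trans_lt' (by norm_num)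
  rw [lintegral_indicator (measurable_coord_zero measurableSet_Ioo), setLIntegral_const]
  calc ENNReal.ofReal s⁻¹ * μ ((fun z : ↥(carpet a) => (z : Plane) 0) ⁻¹' Ioo L (L + s))
      ≤ ENNReal.ofReal s⁻¹ * (((∏ j ∈ Finset.range m, (nA a j - 1) : ℕ) : ℝ≥0∞) *
          ENNReal.ofReal (∏ j ∈ Finset.range m, ((a j)⁻¹ ^ 2 - 1)⁻¹)) := by gcongr
    _ = ENNReal.ofReal (∏ j ∈ Finset.range m, (a j)⁻¹ * ((a j)⁻¹ - 1) * ((a j)⁻¹ ^ 2 - 1)⁻¹) := by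
        rw [← ENNReal.ofReal_natCast, hcast,
          ← ENNReal.ofReal_mul (Finset.prod_nonneg fun j hj => (sub_pos.2 (hx j hj)).le),
          ← ENNReal.ofReal_mul (by positivity), hsinv, Finset.prod_mul_distrib,
          Finset.prod_mul_distrib, mul_assoc]
    _ ≤ _ := ENNReal.ofReal_le_ofReal (by
        simpa using prod_mul_sub_one_mul_inv_sq_sub_one_le_exp _ _ hx)

lemma isBounded_csq (c : Plane) (s : ℝ) : Bornology.IsBounded (csq c s) := by
  refine ((PiLp.antilipschitzWith_ofLp 2 _).isBounded_preimage
    (isBounded_Icc (WithLp.ofLp c) (WithLp.ofLp c + fun _ => s))).subset fun p hp => ?_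
  constructor <;> intro i <;> fin_cases i
  exacts [hp.1.1, hp.2.1, hp.1.2, hp.2.2]

lemma carpet_subset_csq : carpet a ⊆ csq 0 1 := by
  intro p hp
  obtain ⟨c, ⟨hc0, hc1⟩, hpc⟩ := mem_iUnion₂.1 (mem_iInter.1 hp 0)
  simpa [csq, hc0, hc1, sA] using hpc

instance : BoundedSpace ↥(carpet a) :=
  boundedSpace_val_set_iff.2 ((isBounded_csq 0 1).subset carpet_subset_csq)

lemma measure_left_ne_zero (ha : GoodSeq a) (hμ : IsNaturalMeasure a μ) :
    μ (Subtype.val ⁻¹' {p : Plane | p 0 ≤ ((nA a 0 - 1) / 2 : ℕ) * sA a 1}) ≠ 0 := by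
  refine measure_preimage_ne_zero_of_compl_in_columns ha hμ
    (measurableSet_le (by fun_prop) measurable_const)
    (Finset.Ico ((nA a 0 - 1) / 2) (nA a 0)) ?_ fun c hc p hp hpS => ?_
  · have := ha.nA_eq_two_mul_add_one 0; rw [Nat.card_Ico]; omega
  · simp only [csq, cellCorner_zero, mem_Icc, mem_ofPred_eq, not_le] at hp hpS
    exact Finset.mem_Ico.2 ⟨natCast_le_of_mul_lt_mul_add_self (ha.sA_pos 1) (by linarith),
      Finset.mem_range.1 (Finset.mem_product.1 (cellIndices_one_subset hc)).1⟩

lemma measure_right_ne_zero (ha : GoodSeq a) (hμ : IsNaturalMeasure a μ) :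
    μ (Subtype.val ⁻¹' {p : Plane | ((nA a 0 - 1) / 2 : ℕ) * sA a 1 + sA a 1 ≤ p 0}) ≠ 0 := by
  refine measure_preimage_ne_zero_of_compl_in_columns ha hμ
    (measurableSet_le measurable_const (by fun_prop))
    (Finset.range ((nA a 0 - 1) / 2 + 1)) ?_ fun c _ p hp hpS => ?_
  · have := ha.nA_eq_two_mul_add_one 0; rw [Finset.card_range]; omega
  · simp only [csq, cellCorner_zero, mem_Icc, mem_ofPred_eq, not_le] at hp hpS
    exact Finset.mem_range.2 (Nat.lt_succ_of_le
      (natCast_le_of_mul_lt_mul_add_self (ha.sA_pos 1) (by linarith)))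

end Carpet

/-- If `a ∉ ℓ¹`, then `S_a` does not support a `1`-Poincaré inequality. -/
theorem carpet_not_supportsPoincare_one_of_not_summable (a : ℕ → ℝ) (ha : GoodSeq a)
    (h : ¬ Summable a) (μ : Measure ↥(carpet a)) (hμ : IsNaturalMeasure a μ) :
    ¬ SupportsPoincare μ 1 := by
  have := hμ.1
  have hcoord := Carpet.lipschitzWith_coord_zero (a := a)
  refine not_supportsPoincare_one_of_forall_exists_upperGradient_lt μ
    (measurable_subtype_coe (measurableSet_le (by fun_prop) measurable_const))
    (measurable_subtype_coe (measurableSet_le measurable_const (by fun_prop)))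
    (Carpet.measure_left_ne_zero ha hμ) (Carpet.measure_right_ne_zero ha hμ) fun ε hε => ?_
  obtain ⟨m, hmε, hm⟩ := (((tendsto_order.1 (tendsto_ofReal_exp_neg_sum_range_div_two
    (fun j => (ha.pos j).le) h)).2 ε hε).and (eventually_ge_atTop 1)).exists
  obtain ⟨hleft, hright⟩ := Carpet.centralColumn_mul_sA_bounds ha hm
  exact ⟨_, _, continuous_ramp.comp hcoord.continuous,
    measurable_const.indicator (Carpet.measurable_coord_zero measurableSet_Ioo),
    isUpperGradient_ramp_comp hcoord _ (ha.sA_pos m),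
    fun z hz => ramp_of_le (ha.sA_pos m).le (le_trans hz hleft),
    fun z hz => ramp_of_ge (ha.sA_pos m) (hright.trans hz),
    (Carpet.lintegral_indicator_centralStrip_le ha hμ m).trans_lt hmε⟩

end
end

section
/- Let a = (a_1, a_2, …) be a sequence in which each a_m is the reciprocal of an odd integer at least 3, let S_a ⊂ ℝ² be the associated carpet with natural measure μ. Then: (i) μ is a doubling measure on S_a, with doubling constant independent of a; and (ii) there is an absolute constant c > 0 such that μ(B(x,r)) ≥ c r² for every x ∈ S_a and every 0 < r ≤ 1. -/
open MeasureTheory Metric Set Filter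
open scoped ENNReal NNReal Topology

noncomputable section

/-!
At scale `r` choose the level `k` with `9 s_{k+1} ≤ r ≤ 9 s_k` and count level-`(k+1)` squares,
each of mass `w_{k+1} ≥ s_{k+1}²`. Their corners lie on the lattice `s_{k+1} ℕ²`, so a ball of
radius `R` meets at most `(2R/s_{k+1} + 2)²` of them. Conversely, the level-`k` square containing
`x` has `n_k ≥ 3` subsquares per side, so it contains a `p × p` block of subsquares around `x`
inside `B(x, r)` with `r ≤ 9 p s_{k+1}`; taking every other subsquare of the block and dropping
the deleted centre leaves at least `p²/8` disjoint squares of the construction. Both counts are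
comparable to `(r/s_{k+1})²` with constants independent of `a`.
-/

lemma abs_sub_apply_le_dist (p q : Plane) (i : Fin 2) : |p i - q i| ≤ dist p q := by
  simpa [Real.dist_eq] using PiLp.dist_apply_le p q i

lemma dist_le_abs_add_abs (p q : Plane) : dist p q ≤ |p 0 - q 0| + |p 1 - q 1| := by
  rw [EuclideanSpace.dist_eq, Fin.sum_univ_two, Real.dist_eq, Real.dist_eq, Real.sqrt_le_iff]
  refine ⟨by positivity, ?_⟩
  nlinarith [abs_nonneg (p 0 - q 0), abs_nonneg (p 1 - q 1), sq_abs (p 0 - q 0),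
    sq_abs (p 1 - q 1)]

lemma mem_csq_iff {p c : Plane} {s : ℝ} : p ∈ csq c s ↔ ∀ i, p i ∈ Icc (c i) (c i + s) := by
  simp [csq, Fin.forall_fin_two]

lemma isClosed_csq (c : Plane) (s : ℝ) : IsClosed (csq c s) :=
  (isClosed_Icc.preimage (by fun_prop)).inter (isClosed_Icc.preimage (by fun_prop))

lemma disjoint_csq_of_lt_abs_sub {c c' : Plane} {s : ℝ} (i : Fin 2) (h : s < |c i - c' i|) :
    Disjoint (csq c s) (csq c' s) := by
  refine Set.disjoint_left.2 fun p hp hp' => h.not_ge ?_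
  have h₁ := mem_csq_iff.1 hp i
  have h₂ := mem_csq_iff.1 hp' i
  rw [abs_le]
  constructor <;> linarith [h₁.1, h₁.2, h₂.1, h₂.2]

lemma exists_apply_succ_le_and_le_apply {f : ℕ → ℝ} {r : ℝ} (h0 : r ≤ f 0)
    (h : ∃ m, f (m + 1) ≤ r) : ∃ k, f (k + 1) ≤ r ∧ r ≤ f k := by
  classical
  refine ⟨Nat.find h, Nat.find_spec h, ?_⟩
  cases hk : Nat.find h with
  | zero => exact h0
  | succ k => exact (not_le.1 (Nat.find_min h (by omega : k < Nat.find h))).le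

lemma exists_finset_gridCell_near {s R : ℝ} (hs : 0 < s) (hR : 0 ≤ R) (z : ℝ) :
    ∃ I : Finset ℕ, (I.card : ℝ) ≤ 2 * R / s + 2 ∧
      ∀ (u : ℕ) (w : ℝ), |w - z| < R → u * s ≤ w → w ≤ u * s + s → u ∈ I := by
  set K := ⌊2 * R / s⌋₊ + 1
  set U := ⌊(z + R) / s⌋₊
  refine ⟨Finset.Icc (U - K) U, ?_, fun u w hw hu hu' => ?_⟩
  · have hK : (K : ℝ) ≤ 2 * R / s + 1 := by
      have := Nat.floor_le (by positivity : 0 ≤ 2 * R / s)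
      push_cast [K]
      linarith
    have : (Finset.Icc (U - K) U).card ≤ K + 1 := by rw [Nat.card_Icc]; omega
    calc ((Finset.Icc (U - K) U).card : ℝ) ≤ K + 1 := by exact_mod_cast this
      _ ≤ _ := by linarith
  · obtain ⟨hlo, hhi⟩ := abs_sub_lt_iff.1 hw
    have hle : u ≤ U := Nat.le_floor ((le_div_iff₀ hs).2 (by linarith))
    have hlt : U < u + K + 1 := by
      rw [Nat.floor_lt' (by omega), div_lt_iff₀ hs]
      have : 2 * R < K * s := by
        rw [← div_lt_iff₀ hs]
        push_cast [K]
        exact Nat.lt_floor_add_one _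
      push_cast
      nlinarith
    exact Finset.mem_Icc.2 ⟨by omega, hle⟩

lemma exists_block_size {s r : ℝ} {n : ℕ} (hs : 0 < s) (hn : 3 ≤ n) (h1 : 9 * s ≤ r)
    (h2 : r ≤ 9 * (n * s)) : ∃ p : ℕ, 3 ≤ p ∧ p ≤ n ∧ 3 * (p * s) ≤ r ∧ r ≤ 9 * (p * s) := by
  have h3s : 0 < 3 * s := by positivity
  have hr : 0 ≤ r / (3 * s) := div_nonneg (by linarith) h3s.le
  have hf : 3 ≤ ⌊r / (3 * s)⌋₊ :=
    Nat.le_floor (by rw [le_div_iff₀ h3s]; push_cast; linarith)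
  rcases le_total n ⌊r / (3 * s)⌋₊ with h | h
  · refine ⟨n, hn, le_rfl, ?_, h2⟩
    have := (Nat.le_floor_iff hr).1 h
    rw [le_div_iff₀ h3s] at this
    linarith
  · refine ⟨_, hf, h, ?_, ?_⟩
    · have := Nat.floor_le hr
      rw [le_div_iff₀ h3s] at this
      linarith
    · have := Nat.lt_floor_add_one (r / (3 * s))
      rw [div_lt_iff₀ h3s] at this
      have : (3 : ℝ) ≤ ⌊r / (3 * s)⌋₊ := by exact_mod_cast hf
      nlinarith

lemma exists_block_near {s c z : ℝ} {n p : ℕ} (hs : 0 < s) (hp : 1 ≤ p) (hpn : p ≤ n)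
    (hz : c ≤ z) (hz' : z ≤ c + n * s) :
    ∃ i₀ : ℕ, i₀ + p ≤ n ∧ ∀ i : ℕ, i₀ ≤ i → i < i₀ + p →
      ∀ w, c + i * s ≤ w → w ≤ c + i * s + s → |w - z| ≤ p * s := by
  set f := ⌊(z - c) / s⌋₊
  have hf : f * s ≤ z - c :=
    (le_div_iff₀ hs).1 (Nat.floor_le (div_nonneg (sub_nonneg.2 hz) hs.le))
  have hf' : z - c < (f + 1) * s := (div_lt_iff₀ hs).1 (Nat.lt_floor_add_one _)
  refine ⟨min f (n - p), by omega, fun i hi hip w hw hw' => abs_le.2 ⟨?_, ?_⟩⟩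
  · rcases le_total f (n - p) with h | h
    · have : (f : ℝ) ≤ i := by exact_mod_cast (min_eq_left h) ▸ hi
      have : (1 : ℝ) ≤ p := by exact_mod_cast hp
      nlinarith
    · have : ((n - p : ℕ) : ℝ) ≤ i := by exact_mod_cast (min_eq_right h) ▸ hi
      rw [Nat.cast_sub hpn] at this
      nlinarith
  · rcases le_total f (n - p) with h | h
    · have : (i : ℝ) + 1 ≤ f + p := by exact_mod_cast (min_eq_left h) ▸ hip
      nlinarith
    · have : (i : ℝ) + 1 ≤ n := by exact_mod_cast (by omega : i + 1 ≤ n)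
      have : ((n - p : ℕ) : ℝ) ≤ f := by exact_mod_cast h
      rw [Nat.cast_sub hpn] at this
      nlinarith

section
variable {a : ℕ → ℝ}

lemma nA_eq_of_apply_eq {m k : ℕ} (h : a m = ((2 * k + 1 : ℕ) : ℝ)⁻¹) : nA a m = 2 * k + 1 := by
  rw [nA, h, inv_inv, Nat.floor_natCast]

lemma GoodSeq.three_le_nA_s10 (ha : GoodSeq a) (m : ℕ) : 3 ≤ nA a m := by
  obtain ⟨k, hk, h⟩ := ha m
  rw [nA_eq_of_apply_eq h]
  omega

lemma GoodSeq.apply_eq_inv_nA (ha : GoodSeq a) (m : ℕ) : a m = (nA a m : ℝ)⁻¹ := by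
  obtain ⟨k, -, h⟩ := ha m
  rw [nA_eq_of_apply_eq h, h]

lemma GoodSeq.apply_pos (ha : GoodSeq a) (m : ℕ) : 0 < a m := by
  have := ha.three_le_nA_s10 m
  rw [ha.apply_eq_inv_nA]
  positivity

lemma GoodSeq.apply_le_third (ha : GoodSeq a) (m : ℕ) : a m ≤ 1 / 3 := by
  rw [ha.apply_eq_inv_nA, one_div]
  exact inv_anti₀ (by norm_num) (by exact_mod_cast ha.three_le_nA_s10 m)

lemma sA_zero : sA a 0 = 1 := Finset.prod_range_zero a

lemma sA_succ (m : ℕ) : sA a (m + 1) = sA a m * a m := Finset.prod_range_succ a m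

lemma GoodSeq.sA_pos_s10 (ha : GoodSeq a) (m : ℕ) : 0 < sA a m :=
  Finset.prod_pos fun j _ => ha.apply_pos j

lemma GoodSeq.sA_le (ha : GoodSeq a) (m : ℕ) : sA a m ≤ (1 / 3) ^ m := by
  simpa [sA] using Finset.prod_le_prod (s := Finset.range m) (fun j _ => (ha.apply_pos j).le)
    (fun j _ => ha.apply_le_third j)

lemma GoodSeq.natCast_nA_mul_sA_succ (ha : GoodSeq a) (m : ℕ) :
    (nA a m : ℝ) * sA a (m + 1) = sA a m := by
  have : (nA a m : ℝ) ≠ 0 := by have := ha.three_le_nA_s10 m; positivity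
  rw [sA_succ, ha.apply_eq_inv_nA]
  field_simp

lemma GoodSeq.exists_scale (ha : GoodSeq a) {r : ℝ} (hr : 0 < r) (hr9 : r ≤ 9) :
    ∃ k, 9 * sA a (k + 1) ≤ r ∧ r ≤ 9 * sA a k := by
  refine exists_apply_succ_le_and_le_apply (f := fun m => 9 * sA a m) (by simpa [sA_zero]) ?_
  obtain ⟨m, hm⟩ := exists_pow_lt_of_lt_one (by positivity : 0 < r / 9)
    (by norm_num : (1 / 3 : ℝ) < 1)
  have : (1 / 3 : ℝ) ^ (m + 1) ≤ (1 / 3) ^ m :=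
    pow_le_pow_of_le_one (by norm_num) (by norm_num) m.le_succ
  exact ⟨m, by linarith [ha.sA_le (m + 1)]⟩

def cellMass (a : ℕ → ℝ) (m : ℕ) : ℝ := ∏ j ∈ Finset.range m, ((a j)⁻¹ ^ 2 - 1)⁻¹

lemma GoodSeq.sq_sA_le_cellMass (ha : GoodSeq a) (m : ℕ) : sA a m ^ 2 ≤ cellMass a m := by
  rw [sA, ← Finset.prod_pow]
  refine Finset.prod_le_prod (fun j _ => by positivity) fun j _ => ?_
  have h3 : (3 : ℝ) ≤ nA a j := by exact_mod_cast ha.three_le_nA_s10 j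
  rw [ha.apply_eq_inv_nA, inv_inv, inv_pow]
  exact inv_anti₀ (by nlinarith) (by linarith)

lemma exists_corner_of_mem_carpet {x : Plane} (hx : x ∈ carpet a) (m : ℕ) :
    ∃ c ∈ corners a m, x ∈ csq c (sA a m) := by
  simpa [precarpet] using Set.mem_iInter.1 hx m

lemma apply_mem_Icc_of_mem_carpet {x : Plane} (hx : x ∈ carpet a) (i : Fin 2) :
    x i ∈ Icc (0 : ℝ) 1 := by
  obtain ⟨c, ⟨h0, h1⟩, hxc⟩ := exists_corner_of_mem_carpet hx 0
  have := mem_csq_iff.1 hxc i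
  fin_cases i <;> simpa [h0, h1, sA_zero] using this

lemma ball_eq_univ_of_two_lt (x : carpet a) {r : ℝ} (hr : 2 < r) : ball x r = univ := by
  refine eq_univ_of_forall fun y => mem_ball.2 ?_
  have hcoord (i : Fin 2) : |(y : Plane) i - (x : Plane) i| ≤ 1 := by
    have hx := apply_mem_Icc_of_mem_carpet x.2 i
    have hy := apply_mem_Icc_of_mem_carpet y.2 i
    exact abs_sub_le_iff.2 ⟨by linarith [hx.1, hy.2], by linarith [hx.2, hy.1]⟩
  rw [Subtype.dist_eq]
  linarith [dist_le_abs_add_abs (y : Plane) x, hcoord 0, hcoord 1]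

lemma GoodSeq.exists_eq_of_mem_corners (ha : GoodSeq a) {m : ℕ} {c : Plane}
    (hc : c ∈ corners a m) : ∃ u v : ℕ, c = !₂[u * sA a m, v * sA a m] := by
  induction m generalizing c with
  | zero => exact ⟨0, 0, by ext i; fin_cases i <;> simp [hc.1, hc.2]⟩
  | succ k ih =>
    obtain ⟨c', hc', i, j, -, -, -, h0, h1⟩ := hc
    obtain ⟨u, v, rfl⟩ := ih hc'
    refine ⟨u * nA a k + i, v * nA a k + j, ?_⟩
    ext l
    fin_cases l
    · simp only [Fin.zero_eta, h0, ← ha.natCast_nA_mul_sA_succ k, Matrix.cons_val_zero,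
        Nat.cast_add, Nat.cast_mul]
      ring
    · simp only [Fin.mk_one, h1, ← ha.natCast_nA_mul_sA_succ k, Matrix.cons_val_one,
        Matrix.cons_val_fin_one, Nat.cast_add, Nat.cast_mul]
      ring

lemma measurableSet_preimage_csq (c : Plane) (s : ℝ) :
    MeasurableSet (Subtype.val ⁻¹' csq c s : Set (carpet a)) :=
  measurable_subtype_coe (isClosed_csq c s).measurableSet

lemma IsNaturalMeasure.measure_le_card_mul {μ : Measure (carpet a)} (hμ : IsNaturalMeasure a μ)
    {m : ℕ} {ι : Type*} {D : Finset ι} {c : ι → Plane} (hc : ∀ i ∈ D, c i ∈ corners a m)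
    {B : Set (carpet a)} (hB : B ⊆ ⋃ i ∈ D, Subtype.val ⁻¹' csq (c i) (sA a m)) :
    μ B ≤ D.card * ENNReal.ofReal (cellMass a m) :=
  calc μ B ≤ ∑ i ∈ D, μ (Subtype.val ⁻¹' csq (c i) (sA a m)) :=
        (measure_mono hB).trans (measure_biUnion_finset_le _ _)
    _ = D.card * ENNReal.ofReal (cellMass a m) := by
        rw [Finset.sum_congr rfl fun i hi => hμ.2 m (c i) (hc i hi), Finset.sum_const,
          nsmul_eq_mul]
        rfl

lemma IsNaturalMeasure.card_mul_le_measure {μ : Measure (carpet a)} (hμ : IsNaturalMeasure a μ)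
    {m : ℕ} {ι : Type*} {D : Finset ι} {c : ι → Plane} (hc : ∀ i ∈ D, c i ∈ corners a m)
    (hdisj : (D : Set ι).PairwiseDisjoint fun i => csq (c i) (sA a m))
    {B : Set (carpet a)} (hB : ∀ i ∈ D, Subtype.val ⁻¹' csq (c i) (sA a m) ⊆ B) :
    D.card * ENNReal.ofReal (cellMass a m) ≤ μ B :=
  calc D.card * ENNReal.ofReal (cellMass a m)
      = ∑ i ∈ D, μ (Subtype.val ⁻¹' csq (c i) (sA a m)) := by
        rw [Finset.sum_congr rfl fun i hi => hμ.2 m (c i) (hc i hi), Finset.sum_const,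
          nsmul_eq_mul]
        rfl
    _ = μ (⋃ i ∈ D, Subtype.val ⁻¹' csq (c i) (sA a m)) :=
        (measure_biUnion_finset (fun i hi j hj hij => (hdisj hi hj hij).preimage _)
          fun i _ => measurableSet_preimage_csq _ _).symm
    _ ≤ μ B := measure_mono (iUnion₂_subset hB)

lemma GoodSeq.measure_ball_le (ha : GoodSeq a) {μ : Measure (carpet a)}
    (hμ : IsNaturalMeasure a μ) (x : carpet a) {R : ℝ} (hR : 0 ≤ R) (m : ℕ) :
    μ (ball x R) ≤
      ENNReal.ofReal ((2 * R / sA a m + 2) ^ 2) * ENNReal.ofReal (cellMass a m) := by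
  classical
  set s := sA a m
  have hs : 0 < s := ha.sA_pos_s10 m
  obtain ⟨I, hI, hIx⟩ := exists_finset_gridCell_near hs hR ((x : Plane) 0)
  obtain ⟨J, hJ, hJx⟩ := exists_finset_gridCell_near hs hR ((x : Plane) 1)
  let c : ℕ × ℕ → Plane := fun uv => !₂[uv.1 * s, uv.2 * s]
  let D := (I ×ˢ J).filter fun uv => c uv ∈ corners a m
  have hcover : ball x R ⊆ ⋃ uv ∈ D, Subtype.val ⁻¹' csq (c uv) s := by
    intro y hy
    obtain ⟨c', hc', hyc⟩ := exists_corner_of_mem_carpet y.2 m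
    obtain ⟨u, v, rfl⟩ := ha.exists_eq_of_mem_corners hc'
    have hd (i : Fin 2) := (abs_sub_apply_le_dist (y : Plane) x i).trans_lt (mem_ball.1 hy)
    have hy0 := mem_csq_iff.1 hyc 0
    have hy1 := mem_csq_iff.1 hyc 1
    refine mem_biUnion (x := (u, v)) (Finset.mem_filter.2 ⟨Finset.mem_product.2
      ⟨hIx u _ (hd 0) hy0.1 hy0.2, hJx v _ (hd 1) hy1.1 hy1.2⟩, hc'⟩) hyc
  have hcard : (D.card : ℝ) ≤ (2 * R / s + 2) ^ 2 := by
    have hD : D.card ≤ I.card * J.card :=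
      (Finset.card_filter_le _ _).trans (Finset.card_product I J).le
    calc (D.card : ℝ) ≤ I.card * J.card := by exact_mod_cast hD
      _ ≤ (2 * R / s + 2) ^ 2 := by rw [sq]; gcongr
  calc μ (ball x R) ≤ D.card * ENNReal.ofReal (cellMass a m) :=
        hμ.measure_le_card_mul (fun uv huv => (Finset.mem_filter.1 huv).2) hcover
    _ ≤ _ := by
        gcongr
        rw [← ENNReal.ofReal_natCast]
        exact ENNReal.ofReal_le_ofReal hcard

lemma GoodSeq.exists_disjoint_cells_subset_ball (ha : GoodSeq a) {x : Plane} (hx : x ∈ carpet a)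
    {k : ℕ} {r : ℝ} (h1 : 9 * sA a (k + 1) ≤ r) (h2 : r ≤ 9 * sA a k) :
    ∃ (D : Finset (ℕ × ℕ)) (c : ℕ × ℕ → Plane), (r / sA a (k + 1)) ^ 2 / 648 ≤ D.card ∧
      (∀ uv ∈ D, c uv ∈ corners a (k + 1)) ∧
      (D : Set (ℕ × ℕ)).PairwiseDisjoint (fun uv => csq (c uv) (sA a (k + 1))) ∧
      ∀ uv ∈ D, csq (c uv) (sA a (k + 1)) ⊆ ball x r := by
  classical
  set s := sA a (k + 1)
  set n := nA a k
  have hs : 0 < s := ha.sA_pos_s10 _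
  have hns : (n : ℝ) * s = sA a k := ha.natCast_nA_mul_sA_succ k
  obtain ⟨c', hc', hxc'⟩ := exists_corner_of_mem_carpet hx k
  obtain ⟨p, hp3, hpn, hpr, hrp⟩ := exists_block_size hs (ha.three_le_nA_s10 k) h1 (by rwa [hns])
  have hx0 := mem_csq_iff.1 hxc' 0
  have hx1 := mem_csq_iff.1 hxc' 1
  obtain ⟨i₀, hi₀, hnear₀⟩ :=
    exists_block_near hs (by omega) hpn hx0.1 (by rw [hns]; exact hx0.2)
  obtain ⟨j₀, hj₀, hnear₁⟩ :=
    exists_block_near hs (by omega) hpn hx1.1 (by rw [hns]; exact hx1.2)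
  set q := (p + 1) / 2
  set E := (n - 1) / 2
  let c : ℕ × ℕ → Plane :=
    fun uv => !₂[c' 0 + (i₀ + 2 * uv.1 : ℕ) * s, c' 1 + (j₀ + 2 * uv.2 : ℕ) * s]
  -- every other subsquare of the block, without the deleted central one
  set D := (Finset.range q ×ˢ Finset.range q).erase ((E - i₀) / 2, (E - j₀) / 2)
  have hD : ∀ uv ∈ D, uv ≠ ((E - i₀) / 2, (E - j₀) / 2) ∧ uv.1 < q ∧ uv.2 < q := by
    simp [D]
  refine ⟨D, c, ?_, fun uv huv => ?_, fun uv huv uv' huv' hne => ?_, fun uv huv y hy => ?_⟩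
  · have hcard : q * q ≤ D.card + 1 := by
      have : (Finset.range q ×ˢ Finset.range q).card - 1 ≤ D.card :=
        Finset.pred_card_le_card_erase
      rw [Finset.card_product, Finset.card_range] at this
      omega
    have hcard' : (q : ℝ) * q ≤ D.card + 1 := by exact_mod_cast hcard
    have hpq : (p : ℝ) ≤ 2 * q := by exact_mod_cast (by omega : p ≤ 2 * q)
    have hp : (3 : ℝ) ≤ p := by exact_mod_cast hp3
    have hr : r / s ≤ 9 * p := by rw [div_le_iff₀ hs]; linarith
    have hr' : 0 ≤ r / s := div_nonneg (by linarith) hs.le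
    nlinarith
  · obtain ⟨hne, hu, hv⟩ := hD uv huv
    refine ⟨c', hc', i₀ + 2 * uv.1, j₀ + 2 * uv.2, by omega, by omega,
      fun ⟨h0, h1⟩ => hne (Prod.ext (by omega) (by omega)), rfl, rfl⟩
  · have hsep (b : ℝ) (l₀ : ℕ) {u u' : ℕ} (h : u ≠ u') :
        s < |(b + (l₀ + 2 * u : ℕ) * s) - (b + (l₀ + 2 * u' : ℕ) * s)| := by
      rcases Nat.lt_or_gt_of_ne h with h | h
      · have : (u : ℝ) + 1 ≤ u' := by exact_mod_cast h
        exact lt_abs.2 (Or.inr (by push_cast; nlinarith))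
      · have : (u' : ℝ) + 1 ≤ u := by exact_mod_cast h
        exact lt_abs.2 (Or.inl (by push_cast; nlinarith))
    by_cases h : uv.1 = uv'.1
    · exact disjoint_csq_of_lt_abs_sub 1 (hsep (c' 1) j₀ fun h' => hne (Prod.ext h h'))
    · exact disjoint_csq_of_lt_abs_sub 0 (hsep (c' 0) i₀ h)
  · obtain ⟨-, hu, hv⟩ := hD uv huv
    have hy0 := mem_csq_iff.1 hy 0
    have hy1 := mem_csq_iff.1 hy 1
    have hd0 := hnear₀ (i₀ + 2 * uv.1) (by omega) (by omega) _ hy0.1 hy0.2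
    have hd1 := hnear₁ (j₀ + 2 * uv.2) (by omega) (by omega) _ hy1.1 hy1.2
    have : 0 < (p : ℝ) * s := by positivity
    exact mem_ball.2 (by linarith [dist_le_abs_add_abs y x])

lemma GoodSeq.le_measure_ball (ha : GoodSeq a) {μ : Measure (carpet a)}
    (hμ : IsNaturalMeasure a μ) (x : carpet a) {k : ℕ} {r : ℝ} (h1 : 9 * sA a (k + 1) ≤ r)
    (h2 : r ≤ 9 * sA a k) :
    ENNReal.ofReal ((r / sA a (k + 1)) ^ 2 / 648) * ENNReal.ofReal (cellMass a (k + 1)) ≤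
      μ (ball x r) := by
  obtain ⟨D, c, hD, hc, hdisj, hsub⟩ := ha.exists_disjoint_cells_subset_ball x.2 h1 h2
  calc _ ≤ D.card * ENNReal.ofReal (cellMass a (k + 1)) := by
        gcongr
        rw [← ENNReal.ofReal_natCast]
        exact ENNReal.ofReal_le_ofReal hD
    _ ≤ μ (ball x r) := hμ.card_mul_le_measure hc hdisj fun uv huv y hy => hsub uv huv hy


lemma GoodSeq.measure_ball_two_mul_le (ha : GoodSeq a) {μ : Measure (carpet a)}
    (hμ : IsNaturalMeasure a μ) (x : carpet a) {r : ℝ} (hr : 0 < r) :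
    μ (ball x (2 * r)) ≤ ENNReal.ofReal 16200 * μ (ball x r) := by
  rcases le_or_gt r 9 with hr9 | hr9
  · obtain ⟨k, hk1, hk⟩ := ha.exists_scale hr hr9
    have ht : 9 ≤ r / sA a (k + 1) := (le_div_iff₀ (ha.sA_pos_s10 _)).2 (by linarith)
    calc μ (ball x (2 * r))
        ≤ ENNReal.ofReal ((2 * (2 * r) / sA a (k + 1) + 2) ^ 2) *
            ENNReal.ofReal (cellMass a (k + 1)) := ha.measure_ball_le hμ x (by positivity) _
      _ ≤ ENNReal.ofReal 16200 * (ENNReal.ofReal ((r / sA a (k + 1)) ^ 2 / 648) *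
            ENNReal.ofReal (cellMass a (k + 1))) := by
          rw [← mul_assoc (ENNReal.ofReal 16200),
            ← ENNReal.ofReal_mul (p := 16200) (by norm_num)]
          gcongr ?_ * _
          apply ENNReal.ofReal_le_ofReal
          rw [mul_div_assoc, mul_div_assoc]
          nlinarith
      _ ≤ ENNReal.ofReal 16200 * μ (ball x r) := by
          gcongr
          exact ha.le_measure_ball hμ x hk1 hk
  · have := hμ.1
    rw [ball_eq_univ_of_two_lt x (by linarith), ball_eq_univ_of_two_lt x (by linarith)]
    exact le_mul_of_one_le_left (by simp) (by simp)

lemma GoodSeq.ofReal_mul_sq_le_measure_ball (ha : GoodSeq a) {μ : Measure (carpet a)}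
    (hμ : IsNaturalMeasure a μ) (x : carpet a) {r : ℝ} (hr : 0 < r) (hr9 : r ≤ 9) :
    ENNReal.ofReal (1 / 648 * r ^ 2) ≤ μ (ball x r) := by
  obtain ⟨k, hk1, hk⟩ := ha.exists_scale hr hr9
  have hs := ha.sA_pos_s10 (k + 1)
  calc ENNReal.ofReal (1 / 648 * r ^ 2)
      = ENNReal.ofReal ((r / sA a (k + 1)) ^ 2 / 648) * ENNReal.ofReal (sA a (k + 1) ^ 2) := by
        rw [← ENNReal.ofReal_mul (by positivity)]
        field_simp
    _ ≤ ENNReal.ofReal ((r / sA a (k + 1)) ^ 2 / 648) * ENNReal.ofReal (cellMass a (k + 1)) := by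
        gcongr
        exact ha.sq_sA_le_cellMass _
    _ ≤ μ (ball x r) := ha.le_measure_ball hμ x hk1 hk

end

/-- (i) The natural measure `μ` on `S_a` is doubling, with doubling constant independent
of `a`; (ii) there is an absolute constant `c > 0` with `μ(B(x,r)) ≥ c r²` for all
`x ∈ S_a` and `0 < r ≤ 1`. -/
theorem carpet_measure_doubling_and_lower_mass_bound :
    (∃ C : ℝ, 0 < C ∧
      ∀ a : ℕ → ℝ, GoodSeq a → ∀ μ : Measure ↥(carpet a), IsNaturalMeasure a μ →
        ∀ (x : ↥(carpet a)) (r : ℝ), 0 < r →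
          μ (ball x (2 * r)) ≤ ENNReal.ofReal C * μ (ball x r)) ∧
    (∃ c : ℝ, 0 < c ∧
      ∀ a : ℕ → ℝ, GoodSeq a → ∀ μ : Measure ↥(carpet a), IsNaturalMeasure a μ →
        ∀ (x : ↥(carpet a)) (r : ℝ), 0 < r → r ≤ 1 →
          ENNReal.ofReal (c * r ^ 2) ≤ μ (ball x r)) := by
  exact ⟨⟨16200, by norm_num, fun a ha μ hμ x r hr => ha.measure_ball_two_mul_le hμ x hr⟩,
    ⟨1 / 648, by norm_num, fun a ha μ hμ x r hr hr1 =>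
      ha.ofReal_mul_sq_le_measure_ball hμ x hr (by linarith)⟩⟩
end
end
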